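/- For every s-adic unique point x₀ and every ε > 0 there is δ > 0 such that |f(x) − f(x₀)| ≤ 2^{-(m−1)} whenever the s-adic expansions of x and x₀ agree in the first m−1 digits; consequently f is continuous at every point with a unique s-adic expansion. -/

import Mathlib

open Set Filter

/-- Value of an `s`-adic code `α`: `∑ αₙ / sⁿ⁺¹`. -/
noncomputable def sval (s : ℕ) (α : ℕ → ℕ) : ℝ := ∑' n, (α n : ℝ) / (s : ℝ) ^ (n + 1)

/-- `α` is a sequence of digits in `{0, …, s−1}`. -/
def isDigits (s : ℕ) (α : ℕ → ℕ) : Prop := ∀ n, α n < s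

/-- The `s`-adic cylinder of rank `m` with base `c₀ … c_{m−1}`. -/
def cylinder (s m : ℕ) (c : ℕ → ℕ) : Set ℝ :=
  {x | ∃ α : ℕ → ℕ, isDigits s α ∧ (∀ i < m, α i = c i) ∧ x = sval s α}

/-- The sequence of output binary digits `βₙ`. -/
def betaSeq (A1 : Finset ℕ) (α : ℕ → ℕ) : ℕ → ℕ
  | 0 => if α 0 ∈ A1 then 1 else 0
  | n + 1 => if α (n + 1) = α n then betaSeq A1 α n else 1 - betaSeq A1 α n

open Topology

/-! The output digits up to position `n` depend only on the input digits up to position `n`,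
so `f` moves by at most `2^{-m}` when the first `m` input digits are kept. Near a point `x₀`
with a unique expansion `c`, every expansion keeps the first `m` digits of `c`: the reals having
an expansion that differs from `c` before position `m` form the continuous image of a closed,
hence compact, set of digit sequences, and this image misses `x₀`. -/

section Expansions

variable {s : ℕ}

theorem sval_eq_ofDigits {α : ℕ → ℕ} (hα : isDigits s α) :
    sval s α = Real.ofDigits (fun n => (⟨α n, hα n⟩ : Fin s)) := by
  simp only [sval, Real.ofDigits, Real.ofDigitsTerm, div_eq_mul_inv]

theorem abs_sval_sub_sval_le {α β : ℕ → ℕ} (hα : isDigits s α) (hβ : isDigits s β) {m : ℕ}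
    (h : ∀ i < m, α i = β i) : |sval s α - sval s β| ≤ ((s : ℝ) ^ m)⁻¹ := by
  rw [sval_eq_ofDigits hα, sval_eq_ofDigits hβ]
  exact Real.abs_ofDigits_sub_ofDigits_le fun i hi => Fin.ext (h i hi)

theorem exists_sval_eq (hs : 1 < s) {x : ℝ} (hx : x ∈ Icc (0 : ℝ) 1) :
    ∃ α, isDigits s α ∧ sval s α = x := by
  obtain ⟨d, -, rfl⟩ := Real.ofDigits_SurjOn hs hx
  exact ⟨fun n => d n, fun n => (d n).isLt, sval_eq_ofDigits fun n => (d n).isLt⟩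

theorem Real.eventually_ofDigits_eq_imp_prefix_eq {x₀ : ℝ} {c : ℕ → Fin s}
    (huniq : ∀ d : ℕ → Fin s, Real.ofDigits d = x₀ → d = c) (m : ℕ) :
    ∀ᶠ x in 𝓝 x₀, ∀ d : ℕ → Fin s, Real.ofDigits d = x → ∀ i < m, d i = c i := by
  set K : Set (ℕ → Fin s) := (fun d (i : Fin m) => d i) ⁻¹' {fun i : Fin m => c i}ᶜ
  have hK : IsClosed K := (isClosed_discrete _).preimage (by fun_prop)
  have hB : IsClosed (Real.ofDigits '' K) :=
    (hK.isCompact.image Real.continuous_ofDigits).isClosed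
  have hx₀ : x₀ ∉ Real.ofDigits '' K := by
    rintro ⟨d, hdK, hd⟩
    exact hdK (by rw [huniq d hd]; rfl)
  filter_upwards [hB.isOpen_compl.mem_nhds hx₀] with x hx d hd i hi
  by_contra hne
  exact hx ⟨d, fun h => hne (congrFun h ⟨i, hi⟩), hd⟩

theorem eventually_sval_eq_imp_prefix_eq {x₀ : ℝ} {c : ℕ → ℕ} (hc : isDigits s c)
    (huniq : ∀ α, isDigits s α → sval s α = x₀ → α = c) (m : ℕ) :
    ∀ᶠ x in 𝓝 x₀, ∀ α, isDigits s α → sval s α = x → ∀ i < m, α i = c i := by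
  have huniq' : ∀ d : ℕ → Fin s, Real.ofDigits d = x₀ → d = fun n => ⟨c n, hc n⟩ :=
    fun d hd => funext fun n => Fin.ext <| congrFun
      (huniq (fun n => d n) (fun n => (d n).isLt) (by rw [sval_eq_ofDigits]; exact hd)) n
  filter_upwards [Real.eventually_ofDigits_eq_imp_prefix_eq huniq' m] with x hx α hα hαx i hi
  exact congrArg Fin.val (hx _ ((sval_eq_ofDigits hα).symm.trans hαx) i hi)

end Expansions

section BetaSeq

variable (A1 : Finset ℕ)

theorem isDigits_betaSeq (α : ℕ → ℕ) : isDigits 2 (betaSeq A1 α) := by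
  intro n
  induction n with
  | zero => simp only [betaSeq]; split <;> omega
  | succ n ih => simp only [betaSeq]; split <;> omega

theorem betaSeq_eq_of_eq {α β : ℕ → ℕ} {m : ℕ} (h : ∀ i < m, α i = β i) :
    ∀ i < m, betaSeq A1 α i = betaSeq A1 β i := by
  intro i hi
  induction i with
  | zero => simp only [betaSeq, h 0 hi]
  | succ n ih => simp only [betaSeq, h (n + 1) hi, h n (by omega), ih (by omega)]

end BetaSeq

theorem f_continuous_at_unary_general (s : ℕ) (hs : 2 < s) (A1 : Finset ℕ) (f : ℝ → ℝ)
    (hf : ∀ α : ℕ → ℕ, isDigits s α → f (sval s α) = sval 2 (betaSeq A1 α))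
    (x₀ : ℝ) (c : ℕ → ℕ) (hc : isDigits s c) (hcx : sval s c = x₀)
    (huniq : ∀ α : ℕ → ℕ, isDigits s α → sval s α = x₀ → α = c) :
    (∀ m : ℕ, 1 ≤ m → ∀ α : ℕ → ℕ, isDigits s α → (∀ i < m - 1, α i = c i) →
      |f (sval s α) - f x₀| ≤ ((1 : ℝ) / 2) ^ (m - 1)) ∧
    ContinuousWithinAt f (Set.Icc (0 : ℝ) 1) x₀ := by
  have hbound : ∀ m : ℕ, 1 ≤ m → ∀ α : ℕ → ℕ, isDigits s α → (∀ i < m - 1, α i = c i) →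
      |f (sval s α) - f x₀| ≤ ((1 : ℝ) / 2) ^ (m - 1) := by
    intro m _ α hα hagree
    rw [hf α hα, ← hcx, hf c hc, one_div, inv_pow]
    exact_mod_cast abs_sval_sub_sval_le (isDigits_betaSeq A1 α) (isDigits_betaSeq A1 c)
      (betaSeq_eq_of_eq A1 hagree)
  refine ⟨hbound, Metric.tendsto_nhds.2 fun ε hε => ?_⟩
  obtain ⟨m, hm⟩ := exists_pow_lt_of_lt_one hε (by norm_num : (1 : ℝ) / 2 < 1)
  filter_upwards [self_mem_nhdsWithin,
    nhdsWithin_le_nhds (eventually_sval_eq_imp_prefix_eq hc huniq m)] with x hx hprefix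
  obtain ⟨α, hα, rfl⟩ := exists_sval_eq (show 1 < s by omega) hx
  rw [Real.dist_eq]
  exact (hbound (m + 1) le_add_self α hα (hprefix α hα rfl)).trans_lt hm

/-- at every point `x₀` with a unique `s`-adic expansion `c`, if the
expansion of `x` agrees with `c` in the first `m−1` digits then
`|f(x) − f(x₀)| ≤ 2^{−(m−1)}`; consequently `f` is continuous (within `[0,1]`) at `x₀`. -/
theorem f_continuous_at_unary (s : ℕ) (hs : 2 < s) (A0 A1 : Finset ℕ)
    (hA : A0 ∪ A1 = Finset.range s) (hdisj : Disjoint A0 A1)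
    (h0 : A0.Nonempty) (h1 : A1.Nonempty) (f : ℝ → ℝ)
    (hf : ∀ α : ℕ → ℕ, isDigits s α → f (sval s α) = sval 2 (betaSeq A1 α))
    (x₀ : ℝ) (c : ℕ → ℕ) (hc : isDigits s c) (hcx : sval s c = x₀)
    (huniq : ∀ α : ℕ → ℕ, isDigits s α → sval s α = x₀ → α = c) :
    (∀ m : ℕ, 1 ≤ m → ∀ α : ℕ → ℕ, isDigits s α → (∀ i < m - 1, α i = c i) →
      |f (sval s α) - f x₀| ≤ ((1 : ℝ) / 2) ^ (m - 1)) ∧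
    ContinuousWithinAt f (Set.Icc (0 : ℝ) 1) x₀ :=
  f_continuous_at_unary_general s hs A1 f hf x₀ c hc hcx huniq
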